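/- arXiv:1302.3310 — 2 statements merged into one kernel-verified Lean document; each statement's English description precedes it below -/
import Mathlib

section
/- Let A_1, ..., A_N be bounded operators on a Hilbert space H. Then the operator norm of the sum A_1 A_1* + ... + A_N A_N* is at most N times the operator norm of A_1* A_1 + ... + A_N* A_N. -/
/-!
Each summand satisfies `‖aᵢ aᵢ*‖ = ‖aᵢ‖² = ‖aᵢ* aᵢ‖`, and `0 ≤ aᵢ* aᵢ ≤ ∑ⱼ aⱼ* aⱼ` in the
order of the C⋆-algebra, so by monotonicity of the norm on positive elements every summand of
`∑ aᵢ aᵢ*` has norm at most `‖∑ⱼ aⱼ* aⱼ‖`; the triangle inequality then gives the factor `N`.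
-/

section CStarAlgebra

variable {A ι : Type*} [NonUnitalCStarAlgebra A] [PartialOrder A] [StarOrderedRing A]

theorem CStarAlgebra.norm_star_mul_self_le_norm_sum {s : Finset ι} (a : ι → A) {i : ι}
    (hi : i ∈ s) : ‖star (a i) * a i‖ ≤ ‖∑ j ∈ s, star (a j) * a j‖ :=
  CStarAlgebra.norm_le_norm_of_nonneg_of_le (star_mul_self_nonneg _)
    (Finset.single_le_sum (fun j _ => star_mul_self_nonneg (a j)) hi)

theorem CStarAlgebra.norm_sum_mul_star_self_le (s : Finset ι) (a : ι → A) :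
    ‖∑ i ∈ s, a i * star (a i)‖ ≤ s.card * ‖∑ i ∈ s, star (a i) * a i‖ :=
  calc ‖∑ i ∈ s, a i * star (a i)‖ ≤ ∑ i ∈ s, ‖a i * star (a i)‖ := norm_sum_le _ _
    _ ≤ ∑ _i ∈ s, ‖∑ j ∈ s, star (a j) * a j‖ := Finset.sum_le_sum fun i hi => by
        rw [CStarRing.norm_self_mul_star, ← CStarRing.norm_star_mul_self]
        exact norm_star_mul_self_le_norm_sum a hi
    _ = s.card * ‖∑ i ∈ s, star (a i) * a i‖ := by rw [Finset.sum_const, nsmul_eq_mul]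

end CStarAlgebra

open ContinuousLinearMap in
/-- For bounded operators `A 1, ..., A N` on a Hilbert space,
`‖∑ Aᵢ Aᵢ*‖ ≤ N * ‖∑ Aᵢ* Aᵢ‖`. -/
theorem stmt0 {H : Type*} [NormedAddCommGroup H] [InnerProductSpace ℂ H] [CompleteSpace H]
    (N : ℕ) (A : Fin N → (H →L[ℂ] H)) :
    ‖∑ i, A i ∘L adjoint (A i)‖ ≤ (N : ℝ) * ‖∑ i, adjoint (A i) ∘L A i‖ := by
  simpa only [← star_eq_adjoint, ← mul_def, Finset.card_univ, Fintype.card_fin] using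
    CStarAlgebra.norm_sum_mul_star_self_le Finset.univ A
end

section
/- Let U ⊆ ℝ^N be open and let f : U → L(H, G) be *-strongly differentiable, i.e. both x ↦ f(x)ξ (ξ ∈ H) and x ↦ f(x)*η (η ∈ G) are continuously differentiable. Let A_i := ∂_i f(x) denote the strong partial derivatives at a point x ∈ U. Then the derivative of the adjoint map f* at x satisfies ‖d(f*)(x)‖ ≤ √N · ‖df(x)‖, where ‖df(x)‖ = ‖Σ_{i=1}^N A_i* A_i‖^{1/2} and ‖d(f*)(x)‖ = ‖Σ_{i=1}^N A_i A_i*‖^{1/2}. -/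
namespace ContinuousLinearMap

variable {ι E F : Type*} [Fintype ι]
  [NormedAddCommGroup E] [InnerProductSpace ℂ E] [CompleteSpace E]
  [NormedAddCommGroup F] [InnerProductSpace ℂ F] [CompleteSpace F]

theorem norm_self_comp_adjoint (A : E →L[ℂ] F) : ‖A ∘L adjoint A‖ = ‖A‖ ^ 2 := by
  simpa only [adjoint_adjoint, LinearIsometryEquiv.norm_map, sq]
    using norm_adjoint_comp_self (adjoint A)

/-- Each summand of the positive operator `∑ j, (A j)† (A j)` lies below it in the Loewner order,
and the norm is monotone on positive elements of the C⋆-algebra `E →L[ℂ] E`. -/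
theorem norm_sq_le_norm_sum_adjoint_comp_self (A : ι → E →L[ℂ] F) (i : ι) :
    ‖A i‖ ^ 2 ≤ ‖∑ j, adjoint (A j) ∘L A j‖ := by
  have hpos : ∀ j, 0 ≤ adjoint (A j) ∘L A j := fun j =>
    (nonneg_iff_isPositive _).mpr (isPositive_adjoint_comp_self (A j))
  rw [sq, ← norm_adjoint_comp_self]
  exact CStarAlgebra.norm_le_norm_of_nonneg_of_le (hpos i)
    (Finset.single_le_sum (fun j _ => hpos j) (Finset.mem_univ i))

theorem norm_sum_self_comp_adjoint_le (A : ι → E →L[ℂ] F) :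
    ‖∑ i, A i ∘L adjoint (A i)‖ ≤ Fintype.card ι * ‖∑ i, adjoint (A i) ∘L A i‖ :=
  calc ‖∑ i, A i ∘L adjoint (A i)‖ ≤ ∑ i, ‖A i ∘L adjoint (A i)‖ := norm_sum_le _ _
    _ = ∑ i, ‖A i‖ ^ 2 := by simp only [norm_self_comp_adjoint]
    _ ≤ ∑ _i : ι, ‖∑ j, adjoint (A j) ∘L A j‖ :=
      Finset.sum_le_sum fun i _ => norm_sq_le_norm_sum_adjoint_comp_self A i
    _ = Fintype.card ι * ‖∑ i, adjoint (A i) ∘L A i‖ := by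
      rw [Finset.sum_const, nsmul_eq_mul, Finset.card_univ]

end ContinuousLinearMap

open ContinuousLinearMap in
theorem stmt7_general {H G : Type*} [NormedAddCommGroup H] [InnerProductSpace ℂ H] [CompleteSpace H]
    [NormedAddCommGroup G] [InnerProductSpace ℂ G] [CompleteSpace G]
    {N : ℕ}
    (A : Fin N → (H →L[ℂ] G)) :
    Real.sqrt ‖∑ i, A i ∘L adjoint (A i)‖
      ≤ Real.sqrt N * Real.sqrt ‖∑ i, adjoint (A i) ∘L A i‖ := by
  rw [← Real.sqrt_mul (Nat.cast_nonneg N)]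
  exact Real.sqrt_le_sqrt <| by
    simpa only [Fintype.card_fin] using norm_sum_self_comp_adjoint_le A

open ContinuousLinearMap in
/-- Let `f : U → L(H,G)` be *-strongly differentiable at `x ∈ U ⊆ ℝ^N` with strong
partial derivatives `A i = ∂ᵢ f(x)` (so that `(A i)* = ∂ᵢ (f*)(x)`). Then
`‖d(f*)(x)‖ ≤ √N ‖df(x)‖`, where `‖df(x)‖ = ‖∑ (A i)* (A i)‖^(1/2)` and
`‖d(f*)(x)‖ = ‖∑ (A i) (A i)*‖^(1/2)`. -/
theorem stmt7 {H G : Type*} [NormedAddCommGroup H] [InnerProductSpace ℂ H] [CompleteSpace H]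
    [NormedAddCommGroup G] [InnerProductSpace ℂ G] [CompleteSpace G]
    {N : ℕ} (U : Set (EuclideanSpace ℝ (Fin N))) (hU : IsOpen U)
    (f : EuclideanSpace ℝ (Fin N) → (H →L[ℂ] G))
    (x : EuclideanSpace ℝ (Fin N)) (hx : x ∈ U)
    (A : Fin N → (H →L[ℂ] G))
    (hA : ∀ (ξ : H) (i : Fin N),
      HasDerivAt (fun t : ℝ => f (x + t • EuclideanSpace.single i (1 : ℝ)) ξ) (A i ξ) 0)
    (hAadj : ∀ (η : G) (i : Fin N),
      HasDerivAt (fun t : ℝ => adjoint (f (x + t • EuclideanSpace.single i (1 : ℝ))) η)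
        (adjoint (A i) η) 0) :
    Real.sqrt ‖∑ i, A i ∘L adjoint (A i)‖
      ≤ Real.sqrt N * Real.sqrt ‖∑ i, adjoint (A i) ∘L A i‖ :=
  stmt7_general A
end
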